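/- arXiv:0705.1128 — 5 statements merged into one kernel-verified Lean document; each statement's English description precedes it below -/
import Mathlib

section
/- Let m : [0,∞) → ℝ be twice continuously differentiable with m(t) ≥ 0 and m'(t) ≤ 0 for all t ≥ 0, and suppose that the function t ↦ e^{2t}(m(t) + m'(t)) is nondecreasing on [0,∞). Then m'(t) → 0 as t → ∞. -/
/-!
Being nonincreasing and nonnegative, `m` converges, so its drop over a window `[t - δ, t]` of
fixed length tends to zero. Monotonicity of `e^{2t}(m + m')` between `s ≤ t` gives
`m'(s) ≤ (e^{2(t-s)} - 1) m(0) + m'(t)`; hence for small `δ` a value `m'(t) ≤ -ε` forces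
`m' ≤ -ε/2` on `[t - δ, t]`, i.e. a drop of `m` by at least `εδ/2` there.
-/

open Filter Set Topology

lemma sub_le_mul_sub_of_hasDerivWithinAt_Ici {f f' : ℝ → ℝ} {a C x y : ℝ}
    (hf : ∀ z ∈ Ici a, HasDerivWithinAt f (f' z) (Ici a) z) (hax : a ≤ x) (hxy : x ≤ y)
    (hC : ∀ z ∈ Ioo x y, f' z ≤ C) : f y - f x ≤ C * (y - x) := by
  have hsub : Icc x y ⊆ Ici a := Icc_subset_Ici_iff hxy |>.2 hax
  have hderiv : ∀ z ∈ Ioo x y, HasDerivAt f (f' z) z := fun z hz =>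
    (hf z (hsub (Ioo_subset_Icc_self hz))).hasDerivAt (Ici_mem_nhds (hax.trans_lt hz.1))
  refine (convex_Icc x y).image_sub_le_mul_sub_of_deriv_le
    (fun z hz => (hf z (hsub hz)).continuousWithinAt.mono hsub)
    (fun z hz => ?_) (fun z hz => ?_) x (left_mem_Icc.2 hxy) y (right_mem_Icc.2 hxy) hxy
  all_goals rw [interior_Icc] at hz
  · exact (hderiv z hz).differentiableAt.differentiableWithinAt
  · exact (hderiv z hz).deriv ▸ hC z hz

lemma AntitoneOn.exists_tendsto_atTop_of_bddBelow {ι α : Type*} [LinearOrder ι]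
    [ConditionallyCompleteLinearOrder α] [TopologicalSpace α] [OrderTopology α]
    {f : ι → α} {a : ι} (hf : AntitoneOn f (Ici a)) (hbdd : BddBelow (f '' Ici a)) :
    ∃ L, Tendsto f atTop (𝓝 L) := by
  have hanti : Antitone (fun x => f (max x a)) := fun x y hxy =>
    hf (le_max_right x a) (le_max_right y a) (max_le_max hxy le_rfl)
  have hrange : BddBelow (range fun x => f (max x a)) :=
    hbdd.mono (range_subset_iff.2 fun x => mem_image_of_mem f (le_max_right x a))
  refine ⟨_, (tendsto_atTop_ciInf hanti hrange).congr' ?_⟩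
  filter_upwards [eventually_ge_atTop a] with x hx
  rw [max_eq_left hx]

lemma le_exp_mul_of_monotoneOn_exp_mul {g : ℝ → ℝ} {k s t : ℝ} {S : Set ℝ}
    (hg : MonotoneOn (fun t => Real.exp (k * t) * g t) S) (hs : s ∈ S) (ht : t ∈ S)
    (hst : s ≤ t) : g s ≤ Real.exp (k * (t - s)) * g t := by
  have h : Real.exp (k * s) * g s ≤ Real.exp (k * t) * g t := hg hs ht hst
  rw [show k * t = k * (t - s) + k * s by ring, Real.exp_add] at h
  refine le_of_mul_le_mul_left ?_ (Real.exp_pos (k * s))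
  linarith

lemma deriv_le_of_monotoneOn_exp_mul {m m' : ℝ → ℝ}
    (hmono : MonotoneOn (fun t => Real.exp (2 * t) * (m t + m' t)) (Ici 0))
    {s t : ℝ} (hs : 0 ≤ s) (hst : s ≤ t) (hmt : m t ≤ m s) :
    m' s ≤ (Real.exp (2 * (t - s)) - 1) * m s + Real.exp (2 * (t - s)) * m' t := by
  have hkey := le_exp_mul_of_monotoneOn_exp_mul (g := fun t => m t + m' t) hmono hs
    (hs.trans hst) hst
  have := mul_le_mul_of_nonneg_left hmt (Real.exp_pos (2 * (t - s))).le
  linarith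

lemma eventually_neg_le_deriv_of_monotoneOn_exp_mul {m m' : ℝ → ℝ}
    (hd : ∀ t ∈ Ici (0:ℝ), HasDerivWithinAt m (m' t) (Ici 0) t)
    (hnonneg : ∀ t ∈ Ici (0:ℝ), 0 ≤ m t) (hnonpos : ∀ t ∈ Ici (0:ℝ), m' t ≤ 0)
    (hmono : MonotoneOn (fun t => Real.exp (2 * t) * (m t + m' t)) (Ici 0))
    {ε : ℝ} (hε : 0 < ε) : ∀ᶠ t in atTop, -ε ≤ m' t := by
  have hanti : AntitoneOn m (Ici 0) := fun x hx y _ hxy => by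
    linarith [sub_le_mul_sub_of_hasDerivWithinAt_Ici hd hx hxy fun z hz =>
      hnonpos z (hx.trans hz.1.le)]
  obtain ⟨L, hL⟩ := hanti.exists_tendsto_atTop_of_bddBelow ⟨0, forall_mem_image.2 hnonneg⟩
  obtain ⟨δ, hδ, hexp⟩ : ∃ δ > 0, (Real.exp (2 * δ) - 1) * m 0 < ε / 2 := by
    have hcont : Tendsto (fun δ => (Real.exp (2 * δ) - 1) * m 0) (𝓝[>] 0) (𝓝 0) := by
      have : Continuous fun δ : ℝ => (Real.exp (2 * δ) - 1) * m 0 := by fun_prop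
      simpa using (this.tendsto 0).mono_left nhdsWithin_le_nhds
    exact ((hcont.eventually (gt_mem_nhds (half_pos hε))).and self_mem_nhdsWithin).exists
      |>.imp fun δ h => ⟨h.2, h.1⟩
  have hdrop : ∀ᶠ t in atTop, m (t - δ) - m t < ε / 2 * δ := by
    have : Tendsto (fun t => m (t - δ) - m t) atTop (𝓝 0) := by
      simpa [Function.comp_def, sub_eq_add_neg] using
        (hL.comp (tendsto_atTop_add_const_right _ (-δ) tendsto_id)).sub hL
    exact this.eventually (gt_mem_nhds (by positivity))
  filter_upwards [hdrop, eventually_ge_atTop δ] with t hdrop ht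
  by_contra! hlt
  have h0 : (0:ℝ) ∈ Ici 0 := mem_Ici.2 le_rfl
  have hbound : ∀ s ∈ Ioo (t - δ) t, m' s ≤ -(ε / 2) := by
    intro s ⟨hs, hst⟩
    have hs0 : s ∈ Ici (0:ℝ) := by simp only [mem_Ici]; linarith
    have ht0 : t ∈ Ici (0:ℝ) := hs0.out.trans hst.le
    have hkey := deriv_le_of_monotoneOn_exp_mul hmono hs0 hst.le (hanti hs0 ht0 hst.le)
    set E := Real.exp (2 * (t - s))
    have hE1 : 1 ≤ E := Real.one_le_exp (by linarith)
    have hEδ : E ≤ Real.exp (2 * δ) := Real.exp_le_exp.2 (by linarith)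
    have h1 : (E - 1) * m s ≤ (Real.exp (2 * δ) - 1) * m 0 :=
      mul_le_mul (by linarith) (hanti h0 hs0 hs0) (hnonneg s hs0) (by linarith)
    have h2 : E * m' t ≤ m' t := by nlinarith
    linarith
  have := sub_le_mul_sub_of_hasDerivWithinAt_Ici hd (sub_nonneg.2 ht) (sub_le_self t hδ.le)
    hbound
  linarith

theorem mass_deriv_tendsto_zero_general
    (m m' : ℝ → ℝ)
    (hd1 : ∀ t ∈ Set.Ici (0:ℝ), HasDerivWithinAt m (m' t) (Set.Ici 0) t)
    (hnonneg : ∀ t ∈ Set.Ici (0:ℝ), 0 ≤ m t)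
    (hnonpos : ∀ t ∈ Set.Ici (0:ℝ), m' t ≤ 0)
    (hmono : MonotoneOn (fun t => Real.exp (2*t) * (m t + m' t)) (Set.Ici 0)) :
    Tendsto m' atTop (nhds 0) := by
  refine tendsto_order.2 ⟨fun a ha => ?_, fun a ha => ?_⟩
  · filter_upwards [eventually_neg_le_deriv_of_monotoneOn_exp_mul hd1 hnonneg hnonpos hmono
      (half_pos (neg_pos.2 ha))] with t ht
    linarith
  · filter_upwards [eventually_ge_atTop 0] with t ht
    exact (hnonpos t ht).trans_lt ha

/-- If `m : [0,∞) → ℝ` is twice continuously differentiable with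
`m(t) ≥ 0` and `m'(t) ≤ 0` for all `t ≥ 0`, and `t ↦ e^{2t}(m(t) + m'(t))` is
nondecreasing on `[0,∞)`, then `m'(t) → 0` as `t → ∞`. -/
theorem mass_deriv_tendsto_zero
    (m m' m'' : ℝ → ℝ)
    (hd1 : ∀ t ∈ Set.Ici (0:ℝ), HasDerivWithinAt m (m' t) (Set.Ici 0) t)
    (hd2 : ∀ t ∈ Set.Ici (0:ℝ), HasDerivWithinAt m' (m'' t) (Set.Ici 0) t)
    (hcont : ContinuousOn m'' (Set.Ici 0))
    (hnonneg : ∀ t ∈ Set.Ici (0:ℝ), 0 ≤ m t)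
    (hnonpos : ∀ t ∈ Set.Ici (0:ℝ), m' t ≤ 0)
    (hmono : MonotoneOn (fun t => Real.exp (2*t) * (m t + m' t)) (Set.Ici 0)) :
    Tendsto m' atTop (nhds 0) :=
  mass_deriv_tendsto_zero_general m m' hd1 hnonneg hnonpos hmono
end

section
/- Let f : [0,∞) → ℝ be differentiable with f(t) ≥ 0 for all t ≥ 0, suppose f is (Lebesgue) integrable on [0,∞), and suppose there is a constant C such that f'(t) ≤ C for all t ≥ 0. Then f(t) → 0 as t → ∞. -/
/-!
With `K = max C 0`, the bound `f' ≤ C` lets `f` drop by at most `K δ` over a window of length `δ`,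
so `δ (f t - K δ) ≤ ∫_{t-δ}^t f`. Integrability of `f` forces these window integrals to tend to
`0`, hence `limsup f ≤ K δ` for every `δ > 0`, while `f ≥ 0`.
-/

open Filter MeasureTheory Set Topology

theorem Convex.image_sub_le_mul_sub_of_hasDerivWithinAt_le {D : Set ℝ} (hD : Convex ℝ D)
    {f f' : ℝ → ℝ} (hf : ∀ x ∈ D, HasDerivWithinAt f (f' x) D x) {C : ℝ}
    (hf'C : ∀ x ∈ interior D, f' x ≤ C) {x y : ℝ} (hx : x ∈ D) (hy : y ∈ D) (hxy : x ≤ y) :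
    f y - f x ≤ C * (y - x) := by
  have hderiv : ∀ z ∈ interior D, HasDerivAt f (f' z) z := fun z hz =>
    (hf z (interior_subset hz)).hasDerivAt (mem_interior_iff_mem_nhds.1 hz)
  exact hD.image_sub_le_mul_sub_of_deriv_le (fun z hz => (hf z hz).continuousWithinAt)
    (fun z hz => (hderiv z hz).differentiableAt.differentiableWithinAt)
    (fun z hz => (hderiv z hz).deriv ▸ hf'C z hz) x hx y hy hxy

theorem intervalIntegral.mul_le_integral_of_forall_le {f : ℝ → ℝ} {a b m : ℝ} (hab : a ≤ b)
    (hf : IntervalIntegrable f volume a b) (hm : ∀ x ∈ Icc a b, m ≤ f x) :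
    (b - a) * m ≤ ∫ x in a..b, f x := by
  simpa using intervalIntegral.integral_mono_on hab intervalIntegrable_const hf hm

theorem tendsto_intervalIntegral_sub_self_atTop {E : Type*} [NormedAddCommGroup E]
    [NormedSpace ℝ E] {f : ℝ → E} {a : ℝ} (hf : IntegrableOn f (Ioi a)) (δ : ℝ) :
    Tendsto (fun t => ∫ x in (t - δ)..t, f x) atTop (𝓝 0) := by
  have hlim := intervalIntegral_tendsto_integral_Ioi a hf tendsto_id
  have hlim_shift := intervalIntegral_tendsto_integral_Ioi a hf
    (tendsto_atTop_add_const_right atTop (-δ) tendsto_id)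
  rw [← sub_self (∫ x in Ioi a, f x)]
  refine (hlim.sub hlim_shift).congr' ?_
  filter_upwards [eventually_ge_atTop a, eventually_ge_atTop (a + δ)] with t hta htaδ
  have hint : ∀ b, a ≤ b → IntervalIntegrable f volume a b := fun b hb =>
    (intervalIntegrable_iff_integrableOn_Ioc_of_le hb).2 (hf.mono_set Ioc_subset_Ioi_self)
  rw [id, ← sub_eq_add_neg]
  exact intervalIntegral.integral_interval_sub_left (hint t hta) (hint _ (by linarith))

/-- A differentiable function `f : [0,∞) → ℝ` that is nonnegative,
Lebesgue integrable on `[0,∞)`, and has derivative bounded above by a constant `C`,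
must tend to `0` at infinity. -/
theorem tendsto_zero_of_integrable_of_deriv_bounded
    (f f' : ℝ → ℝ) (C : ℝ)
    (hd : ∀ t ∈ Set.Ici (0:ℝ), HasDerivWithinAt f (f' t) (Set.Ici 0) t)
    (hnonneg : ∀ t ∈ Set.Ici (0:ℝ), 0 ≤ f t)
    (hint : IntegrableOn f (Set.Ici 0))
    (hC : ∀ t ∈ Set.Ici (0:ℝ), f' t ≤ C) :
    Tendsto f atTop (nhds 0) := by
  set K := max C 0
  have hslope : ∀ s t : ℝ, 0 ≤ s → s ≤ t → f t - f s ≤ K * (t - s) := fun s t hs hst =>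
    (convex_Ici 0).image_sub_le_mul_sub_of_hasDerivWithinAt_le hd
      (fun x hx => (hC x (interior_subset hx)).trans (le_max_left C 0)) hs (hs.trans hst) hst
  refine tendsto_order.2 ⟨fun a ha => ?_, fun ε hε => ?_⟩
  · filter_upwards [eventually_ge_atTop 0] with t ht using ha.trans_le (hnonneg t ht)
  obtain ⟨δ, hδ, hKδ⟩ := exists_pos_mul_lt (half_pos hε) K
  have hwindow := (tendsto_intervalIntegral_sub_self_atTop (hint.mono_set Ioi_subset_Ici_self)
    δ).eventually (gt_mem_nhds (mul_pos hδ (half_pos hε)))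
  filter_upwards [hwindow, eventually_ge_atTop δ] with t hsmall ht
  have hlow : ∀ s ∈ Icc (t - δ) t, f t - K * δ ≤ f s := fun s hs => by
    have hdrop := hslope s t (by linarith [hs.1]) hs.2
    have hKwindow : K * (t - s) ≤ K * δ :=
      mul_le_mul_of_nonneg_left (by linarith [hs.1]) (le_max_right C 0)
    linarith
  have hfi : IntervalIntegrable f volume (t - δ) t :=
    (intervalIntegrable_iff_integrableOn_Icc_of_le (by linarith)).2
      (hint.mono_set fun s hs => le_trans (by linarith) hs.1)
  have hmean := intervalIntegral.mul_le_integral_of_forall_le (by linarith) hfi hlow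
  rw [sub_sub_cancel] at hmean
  have hft : f t - K * δ < ε / 2 := lt_of_mul_lt_mul_left (hmean.trans_lt hsmall) hδ.le
  linarith
end

section
/- Let m ≥ 1 be an integer, and let c > 0 and R > 0. Let F : (0,R) → ℝ be nondecreasing with F(r) > 0 for every r ∈ (0,R), and suppose that for Lebesgue-almost every r ∈ (0,R), F is differentiable at r with F'(r) ≥ m·c·F(r)^{(m-1)/m}. Then F(r) ≥ (c·r)^m for every r ∈ (0,R). -/
/-!
`G = F ^ (1/m)` is monotone and, by the chain rule, `G' ≥ c` almost everywhere. A monotone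
function increases at least by the integral of its derivative, so `G r - G s ≥ c (r - s)` for
`0 < s < r`; letting `s → 0` and using `G ≥ 0` gives `G r ≥ c r`, i.e. `F r ≥ (c r) ^ m`.
-/

open Filter MeasureTheory Set Topology

theorem MonotoneOn.mul_sub_le_sub_of_ae_le_deriv {f : ℝ → ℝ} {a b c : ℝ} (hab : a ≤ b)
    (hf : MonotoneOn f (Icc a b)) (hd : ∀ᵐ x ∂volume.restrict (Ioo a b), c ≤ deriv f x) :
    c * (b - a) ≤ f b - f a := by
  have hf' : MonotoneOn f (uIcc a b) := by rwa [uIcc_of_le hab]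
  have hfab : f a ≤ f b := hf (left_mem_Icc.2 hab) (right_mem_Icc.2 hab) hab
  have hint := hf'.intervalIntegral_deriv_mem_uIcc
  rw [uIcc_of_le (sub_nonneg.2 hfab)] at hint
  calc c * (b - a) = ∫ _ in a..b, c := by simp [mul_comm]
    _ ≤ ∫ x in a..b, deriv f x :=
      intervalIntegral.integral_mono_ae_restrict hab intervalIntegrable_const
        hf'.intervalIntegrable_deriv (by rwa [← restrict_Ioo_eq_restrict_Icc])
    _ ≤ f b - f a := hint.2

theorem MonotoneOn.mul_le_of_ae_le_deriv {f : ℝ → ℝ} {c R : ℝ} (hf : MonotoneOn f (Ioo 0 R))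
    (hf₀ : ∀ r ∈ Ioo 0 R, 0 ≤ f r) (hd : ∀ᵐ x ∂volume.restrict (Ioo 0 R), c ≤ deriv f x)
    {r : ℝ} (hr : r ∈ Ioo 0 R) : c * r ≤ f r := by
  have hgrowth : ∀ s ∈ Ioo 0 r, c * (r - s) ≤ f r := fun s hs => by
    have hsub : Icc s r ⊆ Ioo 0 R := Icc_subset_Ioo hs.1 hr.2
    have := (hf.mono hsub).mul_sub_le_sub_of_ae_le_deriv hs.2.le
      (ae_restrict_of_ae_restrict_of_subset (Ioo_subset_Icc_self.trans hsub) hd)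
    linarith [hf₀ s (hsub (left_mem_Icc.2 hs.2.le))]
  have hlim : Tendsto (fun s => c * (r - s)) (𝓝[>] 0) (𝓝 (c * r)) := by
    have hcont : Continuous fun s : ℝ => c * (r - s) := by fun_prop
    simpa using (hcont.tendsto 0).mono_left nhdsWithin_le_nhds
  exact le_of_tendsto hlim (by filter_upwards [Ioo_mem_nhdsGT hr.1] with s hs using hgrowth s hs)

theorem le_deriv_rpow_inv {F : ℝ → ℝ} {x d m c : ℝ} (hm : 0 < m) (hFx : 0 < F x)
    (hF : HasDerivAt F d x) (hd : m * c * F x ^ ((m - 1) / m) ≤ d) :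
    c ≤ deriv (fun y => F y ^ m⁻¹) x := by
  have hexp : m⁻¹ - 1 = -((m - 1) / m) := by field_simp; ring
  rw [(hF.rpow_const (Or.inl hFx.ne')).deriv, hexp, Real.rpow_neg hFx.le, mul_assoc, ← mul_inv, ← div_eq_mul_inv, le_div_iff₀ (by positivity)]
  linarith

theorem growth_from_differential_inequality_general
    (m : ℕ) (hm : 1 ≤ m) (c R : ℝ) (hc : 0 < c)
    (F : ℝ → ℝ)
    (hmono : MonotoneOn F (Set.Ioo 0 R))
    (hpos : ∀ r ∈ Set.Ioo (0:ℝ) R, 0 < F r)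
    (hderiv : ∀ᵐ r ∂(volume.restrict (Set.Ioo (0:ℝ) R)),
      ∃ d : ℝ, HasDerivAt F d r ∧ (m : ℝ) * c * (F r) ^ (((m : ℝ) - 1) / (m : ℝ)) ≤ d) :
    ∀ r ∈ Set.Ioo (0:ℝ) R, (c * r) ^ m ≤ F r := by
  intro r hr
  have hm₀ : (0 : ℝ) < m := by exact_mod_cast hm
  set G : ℝ → ℝ := fun x => F x ^ (m : ℝ)⁻¹
  have hGmono : MonotoneOn G (Ioo 0 R) := fun x hx y hy hxy =>
    Real.rpow_le_rpow (hpos x hx).le (hmono hx hy hxy) (by positivity)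
  have hGderiv : ∀ᵐ x ∂volume.restrict (Ioo 0 R), c ≤ deriv G x := by
    filter_upwards [hderiv, ae_restrict_mem measurableSet_Ioo] with x ⟨d, hFd, hd⟩ hx
    exact le_deriv_rpow_inv hm₀ (hpos x hx) hFd hd
  have hGr : c * r ≤ G r :=
    hGmono.mul_le_of_ae_le_deriv (fun x hx => (Real.rpow_pos_of_pos (hpos x hx) _).le) hGderiv hr
  calc (c * r) ^ m ≤ G r ^ m := pow_le_pow_left₀ (mul_nonneg hc.le hr.1.le) hGr m
    _ = F r := Real.rpow_inv_natCast_pow (hpos r hr).le (by omega)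

/-- Let `m ≥ 1` be an integer, `c > 0`, `R > 0`.  If `F : (0,R) → ℝ` is
nondecreasing and positive, and for Lebesgue-a.e. `r ∈ (0,R)` it is differentiable at
`r` with `F'(r) ≥ m·c·F(r)^((m-1)/m)`, then `F(r) ≥ (c·r)^m` for every `r ∈ (0,R)`. -/
theorem growth_from_differential_inequality
    (m : ℕ) (hm : 1 ≤ m) (c R : ℝ) (hc : 0 < c) (hR : 0 < R)
    (F : ℝ → ℝ)
    (hmono : MonotoneOn F (Set.Ioo 0 R))
    (hpos : ∀ r ∈ Set.Ioo (0:ℝ) R, 0 < F r)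
    (hderiv : ∀ᵐ r ∂(volume.restrict (Set.Ioo (0:ℝ) R)),
      ∃ d : ℝ, HasDerivAt F d r ∧ (m : ℝ) * c * (F r) ^ (((m : ℝ) - 1) / (m : ℝ)) ≤ d) :
    ∀ r ∈ Set.Ioo (0:ℝ) R, (c * r) ^ m ≤ F r :=
  growth_from_differential_inequality_general m hm c R hc F hmono hpos hderiv
end

section
/- Let n ≥ 3, let R > 0, let Ω ⊆ ℝⁿ be an open set containing {x : ‖x‖ ≥ R}, and let v be a bounded function, continuous on the closure of Ω and harmonic on Ω, such that v ≤ 0 on the topological boundary of Ω and v(x) → -c as ‖x‖ → ∞, where c ≥ 0. Then for every x with ‖x‖ ≥ R, v(x) ≤ c·((R/‖x‖)^{n-2} − 1). -/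
open Filter MeasureTheory

/-- A function is harmonic on an open subset of `ℝⁿ` if it is smooth there and its
Euclidean Laplacian (the sum of its pure second partial derivatives) vanishes
identically. -/
def HarmonicOnSet {n : ℕ} (f : EuclideanSpace ℝ (Fin n) → ℝ)
    (Ω : Set (EuclideanSpace ℝ (Fin n))) : Prop :=
  ContDiffOn ℝ (⊤ : ℕ∞) f Ω ∧
    ∀ x ∈ Ω, ∑ i : Fin n,
      fderiv ℝ (fun y => fderiv ℝ f y (EuclideanSpace.single i (1:ℝ))) x
        (EuclideanSpace.single i (1:ℝ)) = 0

section Aux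

set_option linter.unusedVariables false

variable {n : ℕ}

/-- Second derivative data along the coordinate slice through `x` in direction `i`. -/
def SliceDeriv2 (f : EuclideanSpace ℝ (Fin n) → ℝ) (x : EuclideanSpace ℝ (Fin n))
    (i : Fin n) (a : ℝ) : Prop :=
  ∃ g' : ℝ → ℝ,
    (∀ᶠ t in nhds (0:ℝ),
      HasDerivAt (fun s => f (x + s • EuclideanSpace.single i (1:ℝ))) (g' t) t) ∧
    HasDerivAt g' a 0

def Ssq (y : EuclideanSpace ℝ (Fin n)) : ℝ := ∑ i, (y i) ^ 2

lemma Ssq_eq_norm_sq (y : EuclideanSpace ℝ (Fin n)) : Ssq y = ‖y‖ ^ 2 := by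
  rw [EuclideanSpace.norm_eq, Real.sq_sqrt (by positivity)]
  simp [Ssq, sq_abs]

lemma Ssq_nonneg (y : EuclideanSpace ℝ (Fin n)) : 0 ≤ Ssq y := by
  rw [Ssq_eq_norm_sq]; positivity

lemma Ssq_continuous : Continuous (Ssq (n := n)) := by
  have : (Ssq (n := n)) = fun y => ‖y‖ ^ 2 := funext Ssq_eq_norm_sq
  rw [this]; continuity

lemma Ssq_slice (x : EuclideanSpace ℝ (Fin n)) (i : Fin n) (t : ℝ) :
    Ssq (x + t • EuclideanSpace.single i (1:ℝ)) = Ssq x + 2 * x i * t + t ^ 2 := by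
  unfold Ssq
  have : ∀ j : Fin n, ((x + t • EuclideanSpace.single i (1:ℝ)) j) ^ 2
      = (x j) ^ 2 + (if j = i then 2 * x j * t + t ^ 2 else 0) := by
    intro j
    have happ : (x + t • EuclideanSpace.single i (1:ℝ)) j
        = x j + (if j = i then t else 0) := by
      simp [EuclideanSpace.single_apply, mul_ite]
    rw [happ]
    by_cases h : j = i <;> simp [h] <;> ring
  rw [Finset.sum_congr rfl (fun j _ => this j), Finset.sum_add_distrib,
    Finset.sum_ite_eq' Finset.univ i (fun j => 2 * x j * t + t ^ 2)]
  simp [add_assoc]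

/-- Second derivative test: at an interior local maximum the second derivative is
nonpositive. -/
lemma slice_second_nonpos {g g' : ℝ → ℝ} {m : ℝ} (hmax : IsLocalMax g 0)
    (hg : ∀ᶠ t in nhds (0:ℝ), HasDerivAt g (g' t) t) (hg' : HasDerivAt g' m 0) : m ≤ 0 := by
  by_contra hcon
  push_neg at hcon
  have h0 : g' 0 = 0 := hmax.hasDerivAt_eq_zero hg.self_of_nhds
  have hslope : Tendsto (slope g' 0) (nhdsWithin (0:ℝ) {(0:ℝ)}ᶜ) (nhds m) :=
    hasDerivAt_iff_tendsto_slope.mp hg'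
  have hev : ∀ᶠ t in nhdsWithin (0:ℝ) {(0:ℝ)}ᶜ, m / 2 < slope g' 0 t :=
    hslope.eventually (eventually_gt_nhds (half_lt_self hcon))
  have hev' : ∀ᶠ t in nhds (0:ℝ), t ≠ 0 → m / 2 < slope g' 0 t := by
    simpa [eventually_nhdsWithin_iff] using hev
  have hall : ∀ᶠ t in nhds (0:ℝ),
      (HasDerivAt g (g' t) t ∧ g t ≤ g 0) ∧ (t ≠ 0 → m / 2 < slope g' 0 t) :=
    (hg.and hmax).and hev'
  rw [Metric.eventually_nhds_iff] at hall
  obtain ⟨δ, hδ, hP⟩ := hall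
  have hdist : ∀ t : ℝ, |t| < δ → (HasDerivAt g (g' t) t ∧ g t ≤ g 0) ∧
      (t ≠ 0 → m / 2 < slope g' 0 t) := by
    intro t ht
    exact hP (by simpa [Real.dist_eq] using ht)
  set t₀ : ℝ := δ / 2 with ht₀
  have ht₀pos : 0 < t₀ := half_pos hδ
  have ht₀lt : ∀ t ∈ Set.Icc (0:ℝ) t₀, |t| < δ := by
    intro t ht
    rw [abs_of_nonneg ht.1]
    calc t ≤ t₀ := ht.2
    _ < δ := half_lt_self hδ
  have hmono : StrictMonoOn g (Set.Icc 0 t₀) := by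
    apply strictMonoOn_of_deriv_pos (convex_Icc 0 t₀)
    · intro t ht
      exact ((hdist t (ht₀lt t ht)).1.1.differentiableAt.continuousAt).continuousWithinAt
    · intro t ht
      rw [interior_Icc] at ht
      have h1 := hdist t (ht₀lt t ⟨le_of_lt ht.1, le_of_lt ht.2⟩)
      rw [h1.1.1.deriv]
      have h2 := h1.2 (ne_of_gt ht.1)
      rw [slope_def_field, h0, sub_zero, sub_zero, lt_div_iff₀ ht.1] at h2
      nlinarith [mul_pos (half_pos hcon) ht.1]
  have := hmono (Set.left_mem_Icc.mpr (le_of_lt ht₀pos))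
    (Set.right_mem_Icc.mpr (le_of_lt ht₀pos)) ht₀pos
  have hle := (hdist t₀ (ht₀lt t₀ (Set.right_mem_Icc.mpr (le_of_lt ht₀pos)))).1.2
  linarith

/-- A `C^∞` function on an open set has slice second derivative data given by the
iterated Fréchet derivative. -/
lemma sliceDeriv2_of_contDiffOn {f : EuclideanSpace ℝ (Fin n) → ℝ}
    {U : Set (EuclideanSpace ℝ (Fin n))} (hU : IsOpen U) {x : EuclideanSpace ℝ (Fin n)}
    (hx : x ∈ U) (hf : ContDiffOn ℝ (⊤ : ℕ∞) f U) (i : Fin n) :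
    SliceDeriv2 f x i
      (fderiv ℝ (fun y => fderiv ℝ f y (EuclideanSpace.single i (1:ℝ))) x
        (EuclideanSpace.single i (1:ℝ))) := by
  set e : EuclideanSpace ℝ (Fin n) := EuclideanSpace.single i (1:ℝ) with he
  set L : ℝ → EuclideanSpace ℝ (Fin n) := fun t => x + t • e with hL
  have hLd : ∀ t : ℝ, HasDerivAt L e t := by
    intro t
    have h1 : HasDerivAt (fun s : ℝ => s • e) ((1:ℝ) • e) t := (hasDerivAt_id t).smul_const e
    rw [one_smul] at h1
    exact h1.const_add x
  have hL0 : L 0 = x := by simp [hL]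
  have hLcont : Continuous L := continuous_const.add (continuous_id.smul continuous_const)
  have hfx : ContDiffAt ℝ (⊤ : ℕ∞) f x := hf.contDiffAt (hU.mem_nhds hx)
  have hmem : ∀ᶠ t in nhds (0:ℝ), L t ∈ U := by
    have := hLcont.continuousAt (x := (0:ℝ))
    rw [ContinuousAt, hL0] at this
    exact this (hU.mem_nhds hx)
  refine ⟨fun t => fderiv ℝ f (L t) e, ?_, ?_⟩
  · filter_upwards [hmem] with t ht
    have hdiff : HasFDerivAt f (fderiv ℝ f (L t)) (L t) :=
      ((hf.contDiffAt (hU.mem_nhds ht)).differentiableAt (by simp)).hasFDerivAt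
    exact hdiff.comp_hasDerivAt t (hLd t)
  · have hfd : ContDiffAt ℝ 1 (fderiv ℝ f) x := hfx.fderiv_right (by exact WithTop.coe_le_coe.mpr le_top)
    have hF : DifferentiableAt ℝ (fun y => fderiv ℝ f y e) x := by
      have : DifferentiableAt ℝ (fderiv ℝ f) x := hfd.differentiableAt one_ne_zero
      exact (ContinuousLinearMap.apply ℝ ℝ e).differentiableAt.comp x this
    have hF' : HasFDerivAt (fun y => fderiv ℝ f y e)
        (fderiv ℝ (fun y => fderiv ℝ f y e) x) (L 0) := by
      rw [hL0]; exact hF.hasFDerivAt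
    exact hF'.comp_hasDerivAt 0 (hLd 0)

/-- Maximum principle for functions with vanishing slice-Laplacian on a bounded open set. -/
lemma max_principle (hn : 0 < n) {U : Set (EuclideanSpace ℝ (Fin n))} (hU : IsOpen U)
    (hb : Bornology.IsBounded U) {u : EuclideanSpace ℝ (Fin n) → ℝ} {m : ℝ}
    (hcont : ContinuousOn u (closure U))
    (hslice : ∀ x ∈ U, ∃ d : Fin n → ℝ, ∑ i, d i = 0 ∧ ∀ i, SliceDeriv2 u x i (d i))
    (hfr : ∀ x ∈ frontier U, u x ≤ m) :
    ∀ x ∈ U, u x ≤ m := by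
  obtain ⟨r, hr⟩ := hb.subset_closedBall 0
  set B : ℝ := (max r 0) ^ 2 with hB
  have hBnn : 0 ≤ B := by positivity
  have hSB : ∀ y ∈ closure U, Ssq y ≤ B := by
    intro y hy
    rw [Ssq_eq_norm_sq]
    have : ‖y‖ ≤ max r 0 := by
      have hy' : y ∈ Metric.closedBall 0 r := by
        have : closure U ⊆ Metric.closedBall 0 r :=
          closure_minimal hr Metric.isClosed_closedBall
        exact this hy
      rw [Metric.mem_closedBall, dist_zero_right] at hy'
      exact hy'.trans (le_max_left r 0)
    exact pow_le_pow_left₀ (norm_nonneg y) this 2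
  intro x hx
  have key : ∀ η : ℝ, 0 < η → u x ≤ m + η * B := by
    intro η hη
    set G : EuclideanSpace ℝ (Fin n) → ℝ := fun y => u y + η * Ssq y with hG
    have hcomp : IsCompact (closure U) := hb.isCompact_closure
    have hGcont : ContinuousOn G (closure U) :=
      hcont.add ((continuous_const.mul Ssq_continuous).continuousOn)
    obtain ⟨z, hzcl, hzmax⟩ := hcomp.exists_isMaxOn ⟨x, subset_closure hx⟩ hGcont
    by_cases hzin : z ∈ U
    · exfalso
      have hlm : IsLocalMax G z :=
        hzmax.isLocalMax (Filter.mem_of_superset (hU.mem_nhds hzin) subset_closure)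
      obtain ⟨d, hsum, hsl⟩ := hslice z hzin
      have hdle : ∀ i, d i + 2 * η ≤ 0 := by
        intro i
        obtain ⟨g', hg, hg'⟩ := hsl i
        set e : EuclideanSpace ℝ (Fin n) := EuclideanSpace.single i (1:ℝ) with he
        have hLcont : Continuous (fun t : ℝ => z + t • e) :=
          continuous_const.add (continuous_id.smul continuous_const)
        have h0 : z + (0:ℝ) • e = z := by simp
        have hlms : IsLocalMax (fun t : ℝ => G (z + t • e)) 0 := by
          have hca : Tendsto (fun t : ℝ => z + t • e) (nhds 0) (nhds z) := by
            have := hLcont.continuousAt (x := (0:ℝ))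
            rwa [ContinuousAt, h0] at this
          have hev := hca.eventually hlm
          refine hev.mono fun t ht => ?_
          simpa [h0] using ht
        refine slice_second_nonpos hlms (g' := fun t => g' t + η * (2 * z i + 2 * t)) ?_ ?_
        · filter_upwards [hg] with t ht
          have hq : HasDerivAt (fun s : ℝ => η * (Ssq z + 2 * z i * s + s ^ 2))
              (η * (2 * z i + 2 * t)) t := by
            have h1 : HasDerivAt (fun s : ℝ => Ssq z + 2 * z i * s + s ^ 2)
                (2 * z i + 2 * t) t := by
              have := (((hasDerivAt_id t).const_mul (2 * z i)).const_add (Ssq z)).add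
                (hasDerivAt_pow 2 t)
              refine this.congr_deriv ?_
              ring
            exact h1.const_mul η
          have hfun : (fun s : ℝ => G (z + s • e))
              = fun s => u (z + s • e) + η * (Ssq z + 2 * z i * s + s ^ 2) := by
            funext s
            simp only [hG, he, Ssq_slice]
          rw [hfun]
          exact ht.add hq
        · have h2 : HasDerivAt (fun t : ℝ => η * (2 * z i + 2 * t)) (η * 2) 0 := by
            have : HasDerivAt (fun t : ℝ => 2 * z i + 2 * t) 2 0 := by
              simpa using ((hasDerivAt_id (0:ℝ)).const_mul 2).const_add (2 * z i)
            exact this.const_mul η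
          have := hg'.add h2
          refine this.congr_deriv ?_
          ring
      have hsum' : ∑ i, (d i + 2 * η) ≤ ∑ _i : Fin n, (0:ℝ) :=
        Finset.sum_le_sum fun i _ => hdle i
      rw [Finset.sum_add_distrib, hsum, Finset.sum_const, Finset.card_univ,
        Fintype.card_fin, Finset.sum_const_zero, nsmul_eq_mul] at hsum'
      have : 0 < (n : ℝ) * (2 * η) := by positivity
      linarith
    · have hzfr : z ∈ frontier U := by
        rw [frontier, hU.interior_eq]
        exact ⟨hzcl, hzin⟩
      have h1 : u x ≤ G x := by
        have h0 : 0 ≤ η * Ssq x := mul_nonneg hη.le (Ssq_nonneg x)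
        simp only [hG]
        linarith
      have h2 : G x ≤ G z := hzmax (subset_closure hx)
      have h3 : G z ≤ m + η * B := by
        have h4 := hfr z hzfr
        have h5 : η * Ssq z ≤ η * B := mul_le_mul_of_nonneg_left (hSB z hzcl) hη.le
        simp only [hG]
        linarith
      linarith
  refine le_of_forall_pos_le_add fun ε hε => ?_
  have hη : 0 < ε / (B + 1) := by positivity
  have := key _ hη
  have hle : ε / (B + 1) * B ≤ ε := by
    rw [div_mul_eq_mul_div, div_le_iff₀ (by linarith)]
    nlinarith
  linarith

noncomputable def phi (n : ℕ) (y : EuclideanSpace ℝ (Fin n)) : ℝ :=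
  Ssq y ^ ((2 - (n:ℝ)) / 2)

lemma phi_nonneg (y : EuclideanSpace ℝ (Fin n)) : 0 ≤ phi n y :=
  Real.rpow_nonneg (by rw [Ssq_eq_norm_sq]; positivity) _

lemma phi_eq {y : EuclideanSpace ℝ (Fin n)} (hn : 2 ≤ n) (hy : 0 < ‖y‖) :
    phi n y = (‖y‖ ^ (n - 2))⁻¹ := by
  unfold phi
  rw [Ssq_eq_norm_sq, ← Real.rpow_natCast ‖y‖ 2, ← Real.rpow_mul (norm_nonneg y)]
  have h1 : ((2:ℕ):ℝ) * ((2 - (n:ℝ)) / 2) = -(((n - 2 : ℕ) : ℝ)) := by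
    rw [Nat.cast_sub hn]
    push_cast
    ring
  rw [h1, Real.rpow_neg (norm_nonneg y), Real.rpow_natCast]

lemma phi_slice_sum (hn : 2 ≤ n) {x : EuclideanSpace ℝ (Fin n)} (hx : 0 < Ssq x) :
    ∃ d : Fin n → ℝ, ∑ i, d i = 0 ∧ ∀ i, SliceDeriv2 (phi n) x i (d i) := by
  set p : ℝ := (2 - (n:ℝ)) / 2 with hp
  set S₀ : ℝ := Ssq x with hS₀
  refine ⟨fun i => 4 * p * (p - 1) * S₀ ^ (p - 2) * (x i) ^ 2 + 2 * p * S₀ ^ (p - 1),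
    ?_, ?_⟩
  · rw [Finset.sum_add_distrib, Finset.sum_const, Finset.card_univ, Fintype.card_fin,
      ← Finset.mul_sum]
    have hS : ∑ i, (x i) ^ 2 = S₀ := rfl
    rw [hS, nsmul_eq_mul]
    have h2 : S₀ ^ (p - 2) * S₀ = S₀ ^ (p - 1) := by
      nth_rewrite 2 [← Real.rpow_one S₀]
      rw [← Real.rpow_add hx, show p - 2 + 1 = p - 1 by ring]
    have h3 : (4 * p * (p - 1) * S₀ ^ (p - 2)) * S₀
        = 4 * p * (p - 1) * S₀ ^ (p - 1) := by
      rw [mul_assoc, h2]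
    rw [h3]
    have hpval : 4 * p * (p - 1) + 2 * (n:ℝ) * p = 0 := by
      rw [hp]; ring
    linear_combination S₀ ^ (p - 1) * hpval
  · intro i
    set σ : ℝ → ℝ := fun t => S₀ + 2 * x i * t + t ^ 2 with hσ
    have hσ0 : σ 0 = S₀ := by simp [hσ]
    have hσd : ∀ t, HasDerivAt σ (2 * x i + 2 * t) t := by
      intro t
      have := (((hasDerivAt_id t).const_mul (2 * x i)).const_add S₀).add (hasDerivAt_pow 2 t)
      refine this.congr_deriv ?_
      ring
    have hσcont : Continuous σ := by fun_prop
    have hσpos : ∀ᶠ t in nhds (0:ℝ), 0 < σ t := by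
      have : Tendsto σ (nhds 0) (nhds S₀) := by
        rw [← hσ0]; exact hσcont.continuousAt
      exact this.eventually (eventually_gt_nhds hx)
    refine ⟨fun t => p * σ t ^ (p - 1) * (2 * x i + 2 * t), ?_, ?_⟩
    · filter_upwards [hσpos] with t ht
      have hfun : (fun s : ℝ => phi n (x + s • EuclideanSpace.single i (1:ℝ)))
          = fun s => σ s ^ p := by
        funext s
        simp only [phi, Ssq_slice, hσ, hS₀, hp]
      rw [hfun]
      have hrp : HasDerivAt (fun y : ℝ => y ^ p) (p * σ t ^ (p - 1)) (σ t) :=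
        Real.hasDerivAt_rpow_const (Or.inl (ne_of_gt ht))
      have := hrp.comp t (hσd t)
      exact this
    · have h1 : HasDerivAt (fun t => σ t ^ (p - 1))
          ((p - 1) * S₀ ^ (p - 2) * (2 * x i + 2 * 0)) 0 := by
        have hrp : HasDerivAt (fun y : ℝ => y ^ (p - 1)) ((p - 1) * S₀ ^ (p - 1 - 1)) S₀ :=
          Real.hasDerivAt_rpow_const (Or.inl (ne_of_gt hx))
        have hrp' : HasDerivAt (fun y : ℝ => y ^ (p - 1))
            ((p - 1) * σ 0 ^ (p - 1 - 1)) (σ 0) := by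
          rw [hσ0]; exact hrp
        have := hrp'.comp 0 (hσd 0)
        refine this.congr_deriv ?_
        rw [hσ0]
        ring_nf
      have h2 : HasDerivAt (fun t => p * σ t ^ (p - 1))
          (p * ((p - 1) * S₀ ^ (p - 2) * (2 * x i))) 0 := by
        have := h1.const_mul p
        refine this.congr_deriv ?_
        ring
      have h3 : HasDerivAt (fun t : ℝ => 2 * x i + 2 * t) 2 0 := by
        simpa using ((hasDerivAt_id (0:ℝ)).const_mul 2).const_add (2 * x i)
      have := h2.mul h3
      refine this.congr_deriv ?_
      have hσ0' : σ 0 ^ (p - 1) = S₀ ^ (p - 1) := by rw [hσ0]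
      rw [hσ0']
      ring

lemma SliceDeriv2.combo {f g : EuclideanSpace ℝ (Fin n) → ℝ}
    {x : EuclideanSpace ℝ (Fin n)} {i : Fin n} {a b r s : ℝ}
    (hf : SliceDeriv2 f x i a) (hg : SliceDeriv2 g x i b) :
    SliceDeriv2 (fun y => f y - (r * g y - s)) x i (a - r * b) := by
  obtain ⟨F, hF, hF'⟩ := hf
  obtain ⟨G, hG, hG'⟩ := hg
  refine ⟨fun t => F t - r * G t, ?_, ?_⟩
  · filter_upwards [hF, hG] with t h1 h2
    exact h1.sub ((h2.const_mul r).sub_const s)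
  · exact hF'.sub (hG'.const_mul r)

end Aux

/-- exterior maximum-principle comparison with the capacitary potential
of the sphere of radius `R`. -/
theorem exterior_comparison
    (n : ℕ) (hn : 3 ≤ n) (R c : ℝ) (hR : 0 < R) (hc : 0 ≤ c)
    (Ω : Set (EuclideanSpace ℝ (Fin n))) (hΩ : IsOpen Ω)
    (hsub : {x : EuclideanSpace ℝ (Fin n) | R ≤ ‖x‖} ⊆ Ω)
    (v : EuclideanSpace ℝ (Fin n) → ℝ)
    (hbdd : ∃ C : ℝ, ∀ x ∈ closure Ω, |v x| ≤ C)
    (hcont : ContinuousOn v (closure Ω))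
    (hharm : HarmonicOnSet v Ω)
    (hbdry : ∀ x ∈ frontier Ω, v x ≤ 0)
    (hlim : Tendsto v (comap (fun x : EuclideanSpace ℝ (Fin n) => ‖x‖) atTop)
      (nhds (-c))) :
    ∀ x : EuclideanSpace ℝ (Fin n), R ≤ ‖x‖ →
      v x ≤ c * ((R / ‖x‖) ^ (n - 2) - 1) := by
  intro x₀ hx₀
  have hn2 : 2 ≤ n := by omega
  have hx₀pos : 0 < ‖x₀‖ := lt_of_lt_of_le hR hx₀
  obtain ⟨C, hC⟩ := hbdd
  set C' : ℝ := |C| + 1 with hC'def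
  have hC'pos : 0 < C' := by positivity
  have hC' : ∀ y ∈ closure Ω, |v y| ≤ C' := fun y hy =>
    (hC y hy).trans (by rw [hC'def]; nlinarith [abs_nonneg C, le_abs_self C])
  refine le_of_forall_pos_le_add fun ε hε => ?_
  -- choice of δ
  set δ : ℝ := min (R / 2) (ε * ‖x₀‖ / (2 * C')) with hδdef
  have hδpos : 0 < δ := lt_min (by linarith) (by positivity)
  have hδR : δ < R := lt_of_le_of_lt (min_le_left _ _) (by linarith)
  have hδx₀ : δ < ‖x₀‖ := lt_of_lt_of_le hδR hx₀
  have hδterm : C' * (δ / ‖x₀‖) ^ (n - 2) ≤ ε / 2 := by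
    have hd1 : δ / ‖x₀‖ ≤ 1 := by
      rw [div_le_one hx₀pos]; exact hδx₀.le
    have hd0 : 0 ≤ δ / ‖x₀‖ := by positivity
    have hpow : (δ / ‖x₀‖) ^ (n - 2) ≤ δ / ‖x₀‖ :=
      pow_le_of_le_one hd0 hd1 (by omega)
    have hd2 : δ / ‖x₀‖ ≤ ε / (2 * C') := by
      rw [div_le_div_iff₀ hx₀pos (by positivity)]
      have h1 : δ ≤ ε * ‖x₀‖ / (2 * C') := min_le_right _ _
      calc δ * (2 * C') ≤ (ε * ‖x₀‖ / (2 * C')) * (2 * C') := by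
            apply mul_le_mul_of_nonneg_right h1 (by positivity)
      _ = ε * ‖x₀‖ := by field_simp
    calc C' * (δ / ‖x₀‖) ^ (n - 2) ≤ C' * (ε / (2 * C')) := by
          apply mul_le_mul_of_nonneg_left (hpow.trans hd2) hC'pos.le
    _ = ε / 2 := by field_simp
  -- tail radius
  have htail : ∃ ρ₀ : ℝ, ∀ y : EuclideanSpace ℝ (Fin n), ρ₀ ≤ ‖y‖ → v y < -c + ε / 2 := by
    have hev : ∀ᶠ y in comap (fun y : EuclideanSpace ℝ (Fin n) => ‖y‖) atTop,
        v y < -c + ε / 2 :=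
      hlim.eventually (eventually_lt_nhds (by linarith))
    rw [eventually_comap] at hev
    rw [eventually_atTop] at hev
    obtain ⟨ρ₀, hρ₀⟩ := hev
    exact ⟨ρ₀, fun y hy => hρ₀ ‖y‖ hy y rfl⟩
  obtain ⟨ρ₀, hρ₀⟩ := htail
  set ρ : ℝ := max ρ₀ (‖x₀‖ + 1) with hρdef
  have hρx₀ : ‖x₀‖ < ρ := lt_of_lt_of_le (by linarith) (le_max_right _ _)
  -- barrier
  set a : ℝ := c * R ^ (n - 2) + C' * δ ^ (n - 2) with hadef
  have ha0 : 0 ≤ a := by positivity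
  set W : EuclideanSpace ℝ (Fin n) → ℝ := fun y => a * phi n y - c with hW
  set u : EuclideanSpace ℝ (Fin n) → ℝ := fun y => v y - (a * phi n y - c) with hu
  -- the domain
  set D : Set (EuclideanSpace ℝ (Fin n)) :=
    (Ω ∩ {y | δ < ‖y‖}) ∩ Metric.ball 0 ρ with hD
  have hDopen : IsOpen D :=
    (hΩ.inter (isOpen_lt continuous_const continuous_norm)).inter Metric.isOpen_ball
  have hDb : Bornology.IsBounded D :=
    Metric.isBounded_ball.subset Set.inter_subset_right
  have hx₀D : x₀ ∈ D := by
    refine ⟨⟨hsub hx₀, hδx₀⟩, ?_⟩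
    rw [Metric.mem_ball, dist_zero_right]
    exact hρx₀
  have hclD : closure D ⊆ (closure Ω ∩ {y | δ ≤ ‖y‖}) ∩ Metric.closedBall 0 ρ := by
    apply closure_minimal
    · rintro y ⟨⟨h1, h2⟩, h3⟩
      exact ⟨⟨subset_closure h1, (le_of_lt h2 : δ ≤ ‖y‖)⟩, Metric.ball_subset_closedBall h3⟩
    · exact (isClosed_closure.inter (isClosed_le continuous_const continuous_norm)).inter
        Metric.isClosed_closedBall
  have hSpos : ∀ y : EuclideanSpace ℝ (Fin n), δ ≤ ‖y‖ → 0 < Ssq y := by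
    intro y hy
    rw [Ssq_eq_norm_sq]
    have : 0 < ‖y‖ := lt_of_lt_of_le hδpos hy
    positivity
  -- continuity on the closure
  have hucont : ContinuousOn u (closure D) := by
    have hv : ContinuousOn v (closure D) := hcont.mono fun y hy => (hclD hy).1.1
    have hφ : ContinuousOn (phi n) (closure D) := by
      apply ContinuousOn.rpow_const (Ssq_continuous.continuousOn)
      intro y hy
      exact Or.inl (ne_of_gt (hSpos y (hclD hy).1.2))
    exact hv.sub (((continuousOn_const.mul hφ)).sub continuousOn_const)
  -- slice Laplacian vanishes on D
  have hslice : ∀ y ∈ D, ∃ d : Fin n → ℝ, ∑ i, d i = 0 ∧ ∀ i, SliceDeriv2 u y i (d i) := by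
    rintro y ⟨⟨hyΩ, hyδ⟩, -⟩
    obtain ⟨dφ, hdφsum, hdφ⟩ := phi_slice_sum hn2 (hSpos y (le_of_lt hyδ))
    refine ⟨fun i => (fderiv ℝ (fun z => fderiv ℝ v z (EuclideanSpace.single i (1:ℝ))) y
      (EuclideanSpace.single i (1:ℝ))) - a * dφ i, ?_, ?_⟩
    · rw [Finset.sum_sub_distrib, hharm.2 y hyΩ, ← Finset.mul_sum, hdφsum]
      ring
    · intro i
      exact (sliceDeriv2_of_contDiffOn hΩ hyΩ hharm.1 i).combo (hdφ i)
  -- boundary estimate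
  have hfrD : ∀ y ∈ frontier D, u y ≤ ε / 2 := by
    intro y hy
    have hycl : y ∈ closure D := frontier_subset_closure hy
    have hynotD : y ∉ D := by
      rw [frontier, hDopen.interior_eq] at hy
      exact hy.2
    obtain ⟨⟨hyΩcl, hyδ⟩, hyρ⟩ := hclD hycl
    rw [Metric.mem_closedBall, dist_zero_right] at hyρ
    have hypos : 0 < ‖y‖ := lt_of_lt_of_le hδpos hyδ
    have hφval : phi n y = (‖y‖ ^ (n - 2))⁻¹ := phi_eq hn2 hypos
    have hφpos : 0 < (‖y‖ ^ (n - 2) : ℝ)⁻¹ := by positivity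
    by_cases hyρ' : ρ ≤ ‖y‖
    · -- outer sphere
      have h1 : v y < -c + ε / 2 := hρ₀ y (le_trans (le_max_left _ _) hyρ')
      have h2 : 0 ≤ a * phi n y := mul_nonneg ha0 (phi_nonneg y)
      simp only [hu]
      clear_value a δ ρ C' u W D
      linarith [h1, h2]
    push_neg at hyρ'
    by_cases hyΩ : y ∈ Ω
    · -- inner sphere ‖y‖ = δ
      have hyδeq : ‖y‖ = δ := by
        by_contra hne
        have : δ < ‖y‖ := lt_of_le_of_ne hyδ (Ne.symm hne)
        exact hynotD ⟨⟨hyΩ, this⟩, by rwa [Metric.mem_ball, dist_zero_right]⟩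
      have h1 : v y ≤ C' := (abs_le.mp (hC' y hyΩcl)).2
      have h2 : a * phi n y - c ≥ C' := by
        rw [hφval, hyδeq, hadef]
        have hδpow : (0:ℝ) < δ ^ (n - 2) := by positivity
        have hRδ : (1:ℝ) ≤ (R / δ) ^ (n - 2) :=
          one_le_pow₀ (by rw [le_div_iff₀ hδpos]; linarith)
        have hexp : (c * R ^ (n - 2) + C' * δ ^ (n - 2)) * (δ ^ (n - 2))⁻¹
            = c * (R / δ) ^ (n - 2) + C' := by
          rw [div_pow]
          field_simp
        rw [hexp]
        nlinarith
      simp only [hu]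
      clear_value a δ ρ C' u W D
      linarith [h1, h2]
    · -- frontier of Ω
      have hyfr : y ∈ frontier Ω := by
        rw [frontier, hΩ.interior_eq]
        exact ⟨hyΩcl, hyΩ⟩
      have h1 : v y ≤ 0 := hbdry y hyfr
      have hyR : ‖y‖ < R := by
        by_contra hge
        push_neg at hge
        exact hyΩ (hsub hge)
      have h2 : 0 ≤ a * phi n y - c := by
        rw [hφval, hadef]
        have hRy : (1:ℝ) ≤ (R / ‖y‖) ^ (n - 2) :=
          one_le_pow₀ (by rw [le_div_iff₀ hypos]; linarith)
        have hexp : c * R ^ (n - 2) * (‖y‖ ^ (n - 2))⁻¹ = c * (R / ‖y‖) ^ (n - 2) := by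
          rw [div_pow]
          ring
        have h3 : 0 ≤ C' * δ ^ (n - 2) * (‖y‖ ^ (n - 2))⁻¹ := by positivity
        nlinarith [hexp, mul_le_mul_of_nonneg_left hRy hc]
      simp only [hu]
      clear_value a δ ρ C' u W D
      linarith [h1, h2]
  -- apply the maximum principle
  have hmp := max_principle (by omega) hDopen hDb hucont hslice hfrD x₀ hx₀D
  -- unravel the value of the barrier at x₀
  have hφx₀ : phi n x₀ = (‖x₀‖ ^ (n - 2))⁻¹ := phi_eq hn2 hx₀pos
  have hval : a * phi n x₀ - c
      = c * ((R / ‖x₀‖) ^ (n - 2) - 1) + C' * (δ / ‖x₀‖) ^ (n - 2) := by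
    rw [hφx₀, hadef, div_pow, div_pow]
    field_simp
    ring
  simp only [hu] at hmp
  rw [hval] at hmp
  linarith
end

section
/- Let n ≥ 3, let K₁ ⊆ K₂ be nonempty compact subsets of ℝⁿ, and for i = 1, 2 let Ωᵢ = ℝⁿ ∖ Kᵢ. Suppose vᵢ is bounded, continuous on the closure of Ωᵢ, harmonic on Ωᵢ, vanishes on the topological boundary of Ωᵢ, and satisfies vᵢ(x) → -1 as ‖x‖ → ∞. Then v₁(x) ≤ v₂(x) for every x ∈ Ω₂. -/
open Filter MeasureTheory Set

section Aux
variable {n : ℕ}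
local notation "E" => EuclideanSpace ℝ (Fin n)


lemma second_deriv_nonpos_of_isLocalMax {g : ℝ → ℝ} {s : Set ℝ}
    (hs : IsOpen s) (h0 : (0:ℝ) ∈ s) (hg : ContDiffOn ℝ (⊤ : ℕ∞) g s)
    (hmax : IsLocalMax g 0) : deriv (deriv g) 0 ≤ 0 := by
  by_contra hpos
  push_neg at hpos
  have hg1 : ContDiffOn ℝ (⊤ : ℕ∞) (deriv g) s := hg.deriv_of_isOpen hs (by simp)
  have hc2 : ContinuousOn (deriv (deriv g)) s :=
    hg1.continuousOn_deriv_of_isOpen hs (by simp)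
  have hcont : ContinuousAt (deriv (deriv g)) 0 := hc2.continuousAt (hs.mem_nhds h0)
  have h1 : ∀ᶠ t in nhds (0:ℝ), t ∈ s ∧ 0 < deriv (deriv g) t := by
    filter_upwards [hs.mem_nhds h0, hcont.eventually_const_lt hpos] with t ht h't
    exact ⟨ht, h't⟩
  obtain ⟨δ, hδ, hball⟩ := Metric.eventually_nhds_iff_ball.1 (h1.and hmax)
  -- deriv g is strictly monotone on the ball
  have hmono : StrictMonoOn (deriv g) (Metric.ball (0:ℝ) δ) := by
    apply strictMonoOn_of_deriv_pos (convex_ball _ _)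
    · exact (hg1.continuousOn.mono (fun t ht => ((hball t ht).1).1))
    · intro t ht
      rw [Metric.isOpen_ball.interior_eq] at ht
      exact ((hball t ht).1).2
  have hd0 : deriv g 0 = 0 := hmax.deriv_eq_zero
  -- then deriv g > 0 on (0, δ), so g strictly increasing there
  have hgpos : ∀ t ∈ Set.Ioo (0:ℝ) δ, 0 < deriv g t := by
    intro t ht
    have := hmono (Metric.mem_ball_self hδ)
      (by simp [Real.ball_eq_Ioo]; constructor <;> [linarith [ht.1, ht.2]; linarith [ht.1, ht.2]]) ht.1
    rwa [hd0] at this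
  have hmono2 : StrictMonoOn g (Set.Ico (0:ℝ) δ) := by
    apply strictMonoOn_of_deriv_pos (convex_Ico _ _)
    · exact (hg.continuousOn.mono (fun t ht => by
        have : t ∈ Metric.ball (0:ℝ) δ := by
          simp [Real.ball_eq_Ioo]; exact ⟨by linarith [ht.1, hδ], ht.2⟩
        exact ((hball t this).1).1))
    · intro t ht
      rw [interior_Ico] at ht
      exact hgpos t ht
  have : g (δ/2) > g 0 := hmono2 ⟨le_refl 0, hδ⟩ ⟨by linarith, by linarith⟩ (by linarith)
  have hle : g (δ/2) ≤ g 0 := (hball (δ/2) (by simp [Real.ball_eq_Ioo]; constructor <;> linarith)).2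
  linarith



lemma line_fst {u : E → ℝ} {s : Set E} (hs : IsOpen s) (hu : ContDiffOn ℝ (⊤ : ℕ∞) u s)
    {z e : E} {t : ℝ} (ht : z + t • e ∈ s) :
    HasDerivAt (fun t : ℝ => u (z + t • e)) (fderiv ℝ u (z + t • e) e) t := by
  have hγd : HasDerivAt (fun t : ℝ => z + t • e) e t := by
    simpa using ((hasDerivAt_id t).smul_const e).const_add z
  have hdu : DifferentiableAt ℝ u (z + t • e) :=
    (hu.contDiffAt (hs.mem_nhds ht)).differentiableAt (by simp)
  exact hdu.hasFDerivAt.comp_hasDerivAt t hγd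

lemma line_snd {u : E → ℝ} {s : Set E} (hs : IsOpen s) (hu : ContDiffOn ℝ (⊤ : ℕ∞) u s)
    {z : E} (hz : z ∈ s) (e : E) :
    HasDerivAt (fun t : ℝ => fderiv ℝ u (z + t • e) e)
      (fderiv ℝ (fun y => fderiv ℝ u y e) z e) 0 := by
  have hγd : HasDerivAt (fun t : ℝ => z + t • e) e 0 := by
    simpa using ((hasDerivAt_id (0:ℝ)).smul_const e).const_add z
  have hF : DifferentiableAt ℝ (fun y => fderiv ℝ u y e) z := by
    have h2 : ContDiffAt ℝ (⊤ : ℕ∞) u z := hu.contDiffAt (hs.mem_nhds hz)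
    have h3 : ContDiffAt ℝ 1 (fderiv ℝ u) z := h2.fderiv_right (WithTop.coe_le_coe.mpr le_top)
    exact (h3.differentiableAt one_ne_zero).clm_apply (differentiableAt_const e)
  have hF' : HasFDerivAt (fun y => fderiv ℝ u y e)
      (fderiv ℝ (fun y => fderiv ℝ u y e) z) (z + (0:ℝ) • e) := by
    simpa using hF.hasFDerivAt
  exact hF'.comp_hasDerivAt 0 hγd

lemma maxPrinciple (hn : 0 < n) {U : Set E} (hU : IsOpen U)
    (hUb : Bornology.IsBounded U) {u : E → ℝ}
    (hc : ContinuousOn u (closure U)) (hu : ContDiffOn ℝ (⊤ : ℕ∞) u U)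
    (hlap : ∀ z ∈ U, ∑ i : Fin n,
      fderiv ℝ (fun y => fderiv ℝ u y (EuclideanSpace.single i (1:ℝ))) z
        (EuclideanSpace.single i (1:ℝ)) = 0)
    {M : ℝ} (hM : ∀ y ∈ frontier U, u y ≤ M) :
    ∀ x ∈ closure U, u x ≤ M := by
  obtain ⟨R, hR⟩ := (hUb.closure).subset_closedBall 0
  have hcomp : IsCompact (closure U) := hUb.isCompact_closure
  intro x hx
  have key : ∀ ε : ℝ, 0 < ε → u x ≤ M + ε * (R ^ 2 + 1) := by
    intro ε hε
    set uε : E → ℝ := fun y => u y + ε * ‖y‖ ^ 2 with huε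
    have hqc : ContDiff ℝ (⊤ : ℕ∞) (fun y : E => ε * ‖y‖ ^ 2) :=
      contDiff_const.mul (contDiff_norm_sq ℝ)
    have hcε : ContinuousOn uε (closure U) := hc.add (hqc.continuous.continuousOn)
    have huεs : ContDiffOn ℝ (⊤ : ℕ∞) uε U := hu.add hqc.contDiffOn
    obtain ⟨z, hz, hmax⟩ := hcomp.exists_isMaxOn ⟨x, hx⟩ hcε
    by_cases hzU : z ∈ U
    · exfalso
      -- at interior max point, each second directional derivative of uε is ≤ 0
      have hstep : ∀ i : Fin n,
          fderiv ℝ (fun y => fderiv ℝ u y (EuclideanSpace.single i (1:ℝ))) z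
            (EuclideanSpace.single i (1:ℝ)) + 2 * ε ≤ 0 := by
        intro i
        set e : E := EuclideanSpace.single i (1:ℝ) with he
        set γ : ℝ → E := fun t => z + t • e with hγ
        have hγc : Continuous γ := by continuity
        have hγ0 : γ 0 = z := by simp [hγ]
        have hpre : IsOpen (γ ⁻¹' U) := hU.preimage hγc
        have h0m : (0:ℝ) ∈ γ ⁻¹' U := by simp [hγ0, hzU]
        set g : ℝ → ℝ := fun t => uε (γ t) with hg
        have hloc : IsLocalMax g 0 := by
          filter_upwards [hpre.mem_nhds h0m] with t ht
          have := hmax (subset_closure ht)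
          simpa [hg, hγ0] using this
        have hγsm : ContDiff ℝ (⊤ : ℕ∞) γ := by
          rw [hγ]; exact contDiff_const.add (contDiff_id.smul contDiff_const)
        have hgsm : ContDiffOn ℝ (⊤ : ℕ∞) g (γ ⁻¹' U) :=
          huεs.comp hγsm.contDiffOn (fun t ht => ht)
        have hD : deriv (deriv g) 0 ≤ 0 :=
          second_deriv_nonpos_of_isLocalMax hpre h0m hgsm hloc
        -- compute deriv (deriv g) 0
        set c : ℝ := inner ℝ z e with hc'
        have hnorme : ‖e‖ = 1 := by simp [he]
        have hfun : ∀ t : ℝ, g t = u (γ t) + (ε * ‖z‖ ^ 2 + (2 * ε * c) * t + ε * t ^ 2) := by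
          intro t
          have : ‖γ t‖ ^ 2 = ‖z‖ ^ 2 + 2 * (t * c) + t ^ 2 := by
            have h1 : ‖γ t‖ ^ 2 = ‖z‖ ^ 2 + 2 * inner ℝ z (t • e) + ‖t • e‖ ^ 2 :=
              norm_add_sq_real z (t • e)
            rw [h1, real_inner_smul_right, norm_smul, hnorme, mul_one, Real.norm_eq_abs,
              sq_abs, ← hc']
          simp only [hg, huε, this]
          ring
        have e1 : deriv g =ᶠ[nhds (0:ℝ)]
            fun t => fderiv ℝ u (γ t) e + (2 * ε * c + ε * (2 * t)) := by
          filter_upwards [hpre.mem_nhds h0m] with t ht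
          have hpoly : HasDerivAt (fun t : ℝ => ε * ‖z‖ ^ 2 + (2 * ε * c) * t + ε * t ^ 2)
              (2 * ε * c + ε * (2 * t)) t := by
            have h1 : HasDerivAt (fun t : ℝ => (2 * ε * c) * t) (2 * ε * c) t := by
              simpa using (hasDerivAt_id t).const_mul (2 * ε * c)
            have h2 : HasDerivAt (fun t : ℝ => ε * t ^ 2) (ε * (2 * t)) t := by
              simpa using (hasDerivAt_pow 2 t).const_mul ε
            exact (((hasDerivAt_const t (ε * ‖z‖ ^ 2)).add h1).add h2).congr_deriv (by ring)
          have hsum : HasDerivAt g (fderiv ℝ u (γ t) e + (2 * ε * c + ε * (2 * t))) t := by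
            have := (line_fst hU hu (z := z) (e := e) (t := t) ht).add hpoly
            exact this.congr_of_eventuallyEq (by filter_upwards with s using (hfun s))
          exact hsum.deriv
        have e2 : HasDerivAt (fun t : ℝ => fderiv ℝ u (γ t) e + (2 * ε * c + ε * (2 * t)))
            (fderiv ℝ (fun y => fderiv ℝ u y e) z e + 2 * ε) 0 := by
          have h2 : HasDerivAt (fun t : ℝ => 2 * ε * c + ε * (2 * t)) (2 * ε) 0 := by
            have : HasDerivAt (fun t : ℝ => ε * (2 * t)) (ε * 2) 0 := by
              simpa using ((hasDerivAt_id (0:ℝ)).const_mul 2).const_mul ε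
            exact ((hasDerivAt_const (0:ℝ) (2 * ε * c)).add this).congr_deriv (by ring)
          exact (line_snd hU hu hzU e).add h2
        have : deriv (deriv g) 0 = fderiv ℝ (fun y => fderiv ℝ u y e) z e + 2 * ε := by
          rw [Filter.EventuallyEq.deriv_eq e1]
          exact e2.deriv
        rw [this] at hD
        exact hD
      have hsum : (∑ i : Fin n,
          ((fderiv ℝ (fun y => fderiv ℝ u y (EuclideanSpace.single i (1:ℝ))) z)
            (EuclideanSpace.single i (1:ℝ)) + 2 * ε)) ≤ ∑ _i : Fin n, (0:ℝ) :=
        Finset.sum_le_sum (fun i _ => hstep i)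
      rw [Finset.sum_add_distrib, hlap z hzU] at hsum
      simp only [Finset.sum_const, Finset.card_univ, Fintype.card_fin, nsmul_eq_mul,
        zero_add, Finset.sum_const_zero] at hsum
      have hn' : (0:ℝ) < (n:ℝ) := Nat.cast_pos.mpr hn
      nlinarith [hsum, hn']
    · -- max on the boundary
      have hzf : z ∈ frontier U := by
        rw [hU.frontier_eq]; exact ⟨hz, hzU⟩
      have h1 : uε x ≤ uε z := hmax hx
      have h2 : u z ≤ M := hM z hzf
      have h3 : ‖z‖ ≤ R := by
        have := hR hz; simpa [Metric.mem_closedBall] using this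
      have h4 : ‖z‖ ^ 2 ≤ R ^ 2 := by nlinarith [norm_nonneg z]
      have h5 : 0 ≤ ε * ‖x‖ ^ 2 := by positivity
      have h1' : u x + ε * ‖x‖ ^ 2 ≤ u z + ε * ‖z‖ ^ 2 := h1
      nlinarith [mul_le_mul_of_nonneg_left h4 hε.le]
  by_contra hcon
  push_neg at hcon
  have hR2 : (0:ℝ) < R ^ 2 + 1 := by positivity
  have hε' : 0 < (u x - M) / (2 * (R ^ 2 + 1)) := div_pos (by linarith) (by positivity)
  have h6 := key _ hε'
  have h7 : (u x - M) / (2 * (R ^ 2 + 1)) * (R ^ 2 + 1) = (u x - M) / 2 := by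
    field_simp
  rw [h7] at h6
  linarith


lemma lap_sub {u v : E → ℝ} {s : Set E} (hs : IsOpen s)
    (hu : ContDiffOn ℝ (⊤ : ℕ∞) u s) (hv : ContDiffOn ℝ (⊤ : ℕ∞) v s) {z : E} (hz : z ∈ s) (e : E) :
    fderiv ℝ (fun y => fderiv ℝ (fun w => u w - v w) y e) z e
      = fderiv ℝ (fun y => fderiv ℝ u y e) z e - fderiv ℝ (fun y => fderiv ℝ v y e) z e := by
  have hdiff : ∀ (f : E → ℝ), ContDiffOn ℝ (⊤ : ℕ∞) f s →
      DifferentiableAt ℝ (fun y => fderiv ℝ f y e) z := by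
    intro f hf
    have h2 : ContDiffAt ℝ (⊤ : ℕ∞) f z := hf.contDiffAt (hs.mem_nhds hz)
    have h3 : ContDiffAt ℝ 1 (fderiv ℝ f) z := h2.fderiv_right (WithTop.coe_le_coe.mpr le_top)
    exact (h3.differentiableAt one_ne_zero).clm_apply (differentiableAt_const e)
  have heq : (fun y => fderiv ℝ (fun w => u w - v w) y e)
      =ᶠ[nhds z] fun y => fderiv ℝ u y e - fderiv ℝ v y e := by
    filter_upwards [hs.mem_nhds hz] with y hy
    have hdu : DifferentiableAt ℝ u y := (hu.contDiffAt (hs.mem_nhds hy)).differentiableAt (by simp)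
    have hdv : DifferentiableAt ℝ v y := (hv.contDiffAt (hs.mem_nhds hy)).differentiableAt (by simp)
    rw [fderiv_fun_sub hdu hdv]
    simp
  rw [heq.fderiv_eq, fderiv_fun_sub (hdiff u hu) (hdiff v hv)]
  simp

lemma tail_bound {v : E → ℝ} {L : ℝ}
    (h : Tendsto v (comap (fun x : E => ‖x‖) atTop) (nhds L))
    {ε : ℝ} (hε : 0 < ε) : ∃ R : ℝ, ∀ x : E, R ≤ ‖x‖ → |v x - L| < ε := by
  have hmem : v ⁻¹' (Metric.ball L ε) ∈ comap (fun x : E => ‖x‖) atTop :=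
    h (Metric.ball_mem_nhds L hε)
  rw [mem_comap] at hmem
  obtain ⟨t, ht, hsub⟩ := hmem
  rw [mem_atTop_sets] at ht
  obtain ⟨R, hR⟩ := ht
  exact ⟨R, fun x hx => by
    have := hsub (by simp only [Set.mem_preimage]; exact hR _ hx)
    simpa [Metric.mem_ball, Real.dist_eq] using this⟩

end Aux

/-- domain monotonicity of exterior capacitary potentials: if `K₁ ⊆ K₂`
are nonempty compact sets and `vᵢ` is the exterior potential of `Kᵢ` (bounded,
continuous up to the boundary, harmonic outside `Kᵢ`, vanishing on the boundary and
tending to `-1` at infinity), then `v₁ ≤ v₂` on the complement of `K₂`. -/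
theorem capacitary_potential_monotone
    (n : ℕ) (hn : 3 ≤ n)
    (K₁ K₂ : Set (EuclideanSpace ℝ (Fin n)))
    (hK₁c : IsCompact K₁) (hK₂c : IsCompact K₂)
    (hK₁ne : K₁.Nonempty) (hK₂ne : K₂.Nonempty)
    (hsub : K₁ ⊆ K₂)
    (v₁ v₂ : EuclideanSpace ℝ (Fin n) → ℝ)
    (hbdd₁ : ∃ C : ℝ, ∀ x ∈ closure K₁ᶜ, |v₁ x| ≤ C)
    (hbdd₂ : ∃ C : ℝ, ∀ x ∈ closure K₂ᶜ, |v₂ x| ≤ C)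
    (hcont₁ : ContinuousOn v₁ (closure K₁ᶜ))
    (hcont₂ : ContinuousOn v₂ (closure K₂ᶜ))
    (hharm₁ : HarmonicOnSet v₁ K₁ᶜ)
    (hharm₂ : HarmonicOnSet v₂ K₂ᶜ)
    (hbdry₁ : ∀ x ∈ frontier K₁ᶜ, v₁ x = 0)
    (hbdry₂ : ∀ x ∈ frontier K₂ᶜ, v₂ x = 0)
    (hlim₁ : Tendsto v₁ (comap (fun x : EuclideanSpace ℝ (Fin n) => ‖x‖) atTop)
      (nhds (-1)))
    (hlim₂ : Tendsto v₂ (comap (fun x : EuclideanSpace ℝ (Fin n) => ‖x‖) atTop)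
      (nhds (-1))) :
    ∀ x ∈ K₂ᶜ, v₁ x ≤ v₂ x := by
  have hn0 : 0 < n := by omega
  have hK₁open : IsOpen K₁ᶜ := hK₁c.isClosed.isOpen_compl
  have hK₂open : IsOpen K₂ᶜ := hK₂c.isClosed.isOpen_compl
  have hcc : K₂ᶜ ⊆ K₁ᶜ := Set.compl_subset_compl.mpr hsub
  have hccl : closure K₂ᶜ ⊆ closure K₁ᶜ := closure_mono hcc
  -- Step A: v₁ ≤ 0 on closure K₁ᶜ
  obtain ⟨R₀, hR₀⟩ := tail_bound hlim₁ (ε := 1/2) (by norm_num)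
  obtain ⟨r₁, hr₁⟩ := hK₁c.isBounded.subset_closedBall 0
  have hA : ∀ y ∈ closure K₁ᶜ, v₁ y ≤ 0 := by
    intro y hy
    by_cases hyK : y ∈ K₁ᶜ
    · -- use the max principle on K₁ᶜ ∩ ball 0 R
      set R : ℝ := max (max R₀ (‖y‖ + 1)) (r₁ + 1) with hRdef
      have hRy : ‖y‖ < R := lt_of_lt_of_le (by linarith [le_refl (‖y‖+1)] ) (le_trans (le_max_right _ _) (le_max_left _ _))
      set U : Set (EuclideanSpace ℝ (Fin n)) := K₁ᶜ ∩ Metric.ball 0 R with hUdef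
      have hUopen : IsOpen U := hK₁open.inter Metric.isOpen_ball
      have hUb : Bornology.IsBounded U :=
        (Metric.isBounded_ball (x := (0 : EuclideanSpace ℝ (Fin n))) (r := R)).subset
          Set.inter_subset_right
      have hUcl : closure U ⊆ closure K₁ᶜ := closure_mono Set.inter_subset_left
      have hM : ∀ y' ∈ frontier U, v₁ y' ≤ 0 := by
        intro y' hy'
        rcases frontier_inter_subset K₁ᶜ (Metric.ball 0 R) hy' with h | h
        · rw [hbdry₁ y' h.1]
        · have hsphere : ‖y'‖ = R := by
            have := Metric.frontier_ball_subset_sphere h.2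
            simpa [Metric.mem_sphere, dist_zero_right] using this
          have : |v₁ y' - (-1)| < 1/2 := hR₀ y' (by rw [hsphere]; exact le_trans (le_max_left _ _) (le_max_left _ _))
          rw [abs_lt] at this
          linarith [this.2]
      have := maxPrinciple hn0 hUopen hUb (hcont₁.mono hUcl)
        (hharm₁.1.mono Set.inter_subset_left)
        (fun z hz => hharm₁.2 z hz.1) hM y
        (subset_closure ⟨hyK, by simpa [Metric.mem_ball, dist_zero_right] using hRy⟩)
      exact this
    · have : y ∈ frontier K₁ᶜ := by
        rw [hK₁open.frontier_eq]
        exact ⟨hy, hyK⟩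
      rw [hbdry₁ y this]
  -- Step B
  intro x hx
  apply le_of_forall_pos_le_add
  intro ε hε
  obtain ⟨R₁, hRb₁⟩ := tail_bound hlim₁ (ε := ε/2) (by linarith)
  obtain ⟨R₂, hRb₂⟩ := tail_bound hlim₂ (ε := ε/2) (by linarith)
  obtain ⟨r₂, hr₂⟩ := hK₂c.isBounded.subset_closedBall 0
  set R : ℝ := max (max R₁ R₂) (max (‖x‖ + 1) (r₂ + 1)) with hRdef
  have hRx : ‖x‖ < R :=
    lt_of_lt_of_le (by linarith) (le_trans (le_max_left _ _) (le_max_right _ _))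
  set U : Set (EuclideanSpace ℝ (Fin n)) := K₂ᶜ ∩ Metric.ball 0 R with hUdef
  have hUopen : IsOpen U := hK₂open.inter Metric.isOpen_ball
  have hUb : Bornology.IsBounded U :=
    (Metric.isBounded_ball (x := (0 : EuclideanSpace ℝ (Fin n))) (r := R)).subset
      Set.inter_subset_right
  have hUcl2 : closure U ⊆ closure K₂ᶜ := closure_mono Set.inter_subset_left
  have hUK₁ : U ⊆ K₁ᶜ := Set.inter_subset_left.trans hcc
  set u : EuclideanSpace ℝ (Fin n) → ℝ := fun y => v₁ y - v₂ y with hudef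
  have hcu : ContinuousOn u (closure U) :=
    ((hcont₁.mono (hUcl2.trans hccl)).sub (hcont₂.mono hUcl2))
  have hsm1 : ContDiffOn ℝ (⊤ : ℕ∞) v₁ U := hharm₁.1.mono hUK₁
  have hsm2 : ContDiffOn ℝ (⊤ : ℕ∞) v₂ U := hharm₂.1.mono Set.inter_subset_left
  have hsmu : ContDiffOn ℝ (⊤ : ℕ∞) u U := hsm1.sub hsm2
  have hlapu : ∀ z ∈ U, ∑ i : Fin n,
      fderiv ℝ (fun y => fderiv ℝ u y (EuclideanSpace.single i (1:ℝ))) z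
        (EuclideanSpace.single i (1:ℝ)) = 0 := by
    intro z hz
    have : ∀ i : Fin n,
        fderiv ℝ (fun y => fderiv ℝ u y (EuclideanSpace.single i (1:ℝ))) z
          (EuclideanSpace.single i (1:ℝ))
        = fderiv ℝ (fun y => fderiv ℝ v₁ y (EuclideanSpace.single i (1:ℝ))) z
            (EuclideanSpace.single i (1:ℝ))
          - fderiv ℝ (fun y => fderiv ℝ v₂ y (EuclideanSpace.single i (1:ℝ))) z
              (EuclideanSpace.single i (1:ℝ)) :=
      fun i => lap_sub hUopen hsm1 hsm2 hz _
    rw [Finset.sum_congr rfl (fun i _ => this i), Finset.sum_sub_distrib,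
      hharm₁.2 z (hUK₁ hz), hharm₂.2 z hz.1, sub_zero]
  have hM : ∀ y' ∈ frontier U, u y' ≤ ε := by
    intro y' hy'
    rcases frontier_inter_subset K₂ᶜ (Metric.ball 0 R) hy' with h | h
    · have h1 : v₂ y' = 0 := hbdry₂ y' h.1
      have h2 : v₁ y' ≤ 0 := hA y' (hccl (frontier_subset_closure h.1))
      simp only [hudef]
      linarith
    · have hsphere : ‖y'‖ = R := by
        have := Metric.frontier_ball_subset_sphere h.2
        simpa [Metric.mem_sphere, dist_zero_right] using this
      have hb1 : |v₁ y' - (-1)| < ε/2 := hRb₁ y'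
        (by rw [hsphere]; exact le_trans (le_max_left _ _) (le_max_left _ _))
      have hb2 : |v₂ y' - (-1)| < ε/2 := hRb₂ y'
        (by rw [hsphere]; exact le_trans (le_max_right _ _) (le_max_left _ _))
      rw [abs_lt] at hb1 hb2
      simp only [hudef]
      linarith [hb1.2, hb2.1]
  have hxU : x ∈ closure U :=
    subset_closure ⟨hx, by simpa [Metric.mem_ball, dist_zero_right] using hRx⟩
  have := maxPrinciple hn0 hUopen hUb hcu hsmu hlapu hM x hxU
  simp only [hudef] at this
  linarith
end
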